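/- For every integer k ≥ 2 and every positive integer N, there exist a finite simple connected graph G and an edge e of G such that G − e is connected and γ_L^k(G) − γ_L^k(G − e) ≥ N. -/

import Mathlib

open SimpleGraph Finset

/-- `D` is a distance-`k` dominating set of `G`: every vertex outside `D` is within
distance `k` of some vertex of `D`. -/
def IsKDomSet {V : Type*} (G : SimpleGraph V) (k : ℕ) (D : Finset V) : Prop :=
  ∀ u : V, u ∉ D → ∃ w ∈ D, G.dist u w ≤ k

/-- `R` is a distance-`k` resolving set of `G`: any two distinct vertices are
distinguished by the truncated distance `d_k(x,y) = min (d(x,y)) (k+1)` to some vertex of `R`. -/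
def IsKResSet {V : Type*} (G : SimpleGraph V) (k : ℕ) (R : Finset V) : Prop :=
  ∀ x y : V, x ≠ y → ∃ z ∈ R, min (G.dist x z) (k + 1) ≠ min (G.dist y z) (k + 1)

/-- The distance-`k` domination number `γ_k(G)`. -/
noncomputable def kdom {V : Type*} (G : SimpleGraph V) (k : ℕ) : ℕ :=
  sInf {m : ℕ | ∃ D : Finset V, IsKDomSet G k D ∧ D.card = m}

/-- The distance-`k` dimension `dim_k(G)`. -/
noncomputable def kdim {V : Type*} (G : SimpleGraph V) (k : ℕ) : ℕ :=
  sInf {m : ℕ | ∃ R : Finset V, IsKResSet G k R ∧ R.card = m}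

/-- The distance-`k` location-domination number `γ_L^k(G)`. -/
noncomputable def kld {V : Type*} (G : SimpleGraph V) (k : ℕ) : ℕ :=
  sInf {m : ℕ | ∃ S : Finset V, IsKDomSet G k S ∧ IsKResSet G k S ∧ S.card = m}

/-!
In `graph r` the vertex `b` is adjacent to all others, so every distance is `1` or `2` according
to adjacency, and `x s`, `y s` have the same neighbours outside the gadget
`{x s, y s, x' s, y' s}`. Hence a distance-`k` resolving set meets each of the `2 ^ r` gadgets.
Deleting the edge `ab` makes distances to `a` informative: the four gadget vertices are then at
distances `2, 3, 1, 2` from `a` and `2, 2, 2, 1` from `c`, and `bit j` is at distance `1` or `2` from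
the gadget of `s` according as `j ∈ s` or not. So for `k ≥ 2` the `r + 3` vertices `a, b, c, bit j`
locate and dominate `graph' r`.
-/

namespace SimpleGraph

variable {V W : Type*} {G : SimpleGraph V} {H : SimpleGraph W}

lemma Hom.edist_le (f : G →g H) (u v : V) : H.edist (f u) (f v) ≤ G.edist u v := by
  by_cases hr : G.Reachable u v
  · obtain ⟨p, hp⟩ := hr.exists_walk_length_eq_edist
    simpa [hp] using SimpleGraph.edist_le (p.map f)
  · simp [edist_eq_top_of_not_reachable hr]

lemma Iso.edist_eq (ψ : G ≃g H) (u v : V) : H.edist (ψ u) (ψ v) = G.edist u v :=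
  le_antisymm (ψ.toHom.edist_le u v) (by simpa using ψ.symm.toHom.edist_le (ψ u) (ψ v))

lemma Iso.dist_eq (ψ : G ≃g H) (u v : V) : H.dist (ψ u) (ψ v) = G.dist u v := by
  simp only [dist, ψ.edist_eq]

def Iso.deleteEdge (ψ : G ≃g H) (e : Sym2 V) :
    G.deleteEdges {e} ≃g H.deleteEdges {e.map ψ} where
  toEquiv := ψ.toEquiv
  map_rel_iff' {u v} := by
    have : s(ψ u, ψ v) = e.map ψ ↔ s(u, v) = e :=
      (Sym2.map.injective ψ.injective).eq_iff (a := s(u, v))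
    simp [this, ψ.map_adj_iff]

lemma dist_eq_two_of_adj_of_adj {u v w : V} (huv : u ≠ v) (h : ¬G.Adj u v) (huw : G.Adj u w)
    (hwv : G.Adj w v) : G.dist u v = 2 := by
  have h2 : G.edist u v = 2 := edist_eq_two_iff.2 ⟨huv, h, w, huw, hwv.symm⟩
  rw [← (huw.reachable.trans hwv.reachable).coe_dist_eq_edist] at h2
  exact_mod_cast h2

lemma dist_eq_two_of_forall_adj {u v w : V} (hw : ∀ x, x ≠ w → G.Adj w x) (huv : u ≠ v)
    (h : ¬G.Adj u v) : G.dist u v = 2 := by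
  have hu : u ≠ w := by rintro rfl; exact h (hw v huv.symm)
  have hv : v ≠ w := by rintro rfl; exact h (hw u hu).symm
  exact dist_eq_two_of_adj_of_adj huv h (hw u hu).symm (hw v hv)

lemma connected_of_forall_adj {w : V} (hw : ∀ x, x ≠ w → G.Adj w x) : G.Connected :=
  (connected_iff_exists_forall_reachable G).2
    ⟨w, fun x => by
      by_cases hx : x = w
      · exact hx ▸ .refl x
      · exact (hw x hx).reachable⟩

lemma dist_eq_three_of_adj_of_adj_of_adj {u v w₁ w₂ : V} (huv : u ≠ v) (h : ¬G.Adj u v)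
    (hc : G.commonNeighbors u v = ∅) (h₁ : G.Adj u w₁) (h₂ : G.Adj w₁ w₂) (h₃ : G.Adj w₂ v) :
    G.dist u v = 3 := by
  have hle : G.edist u v ≤ 3 := by simpa using (Walk.cons h₁ (.cons h₂ (.cons h₃ .nil))).edist_le
  have hlt : 2 < G.edist u v := two_lt_edist_iff.2 ⟨huv, h, hc⟩
  rw [← (h₁.reachable.trans (h₂.reachable.trans h₃.reachable)).coe_dist_eq_edist] at hle hlt
  norm_cast at hle hlt
  omega

end SimpleGraph

section LocatingDominating

variable {V W : Type*} {G : SimpleGraph V} {H : SimpleGraph W} {k : ℕ} {S : Finset V}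

lemma IsKDomSet.map (ψ : G ≃g H) (hS : IsKDomSet G k S) :
    IsKDomSet H k (S.map ψ.toEquiv.toEmbedding) := by
  intro u hu
  obtain ⟨w, hw, hd⟩ := hS (ψ.symm u) (by rwa [mem_map_equiv] at hu)
  exact ⟨ψ w, mem_map_of_mem _ hw, by rwa [← ψ.apply_symm_apply u, ψ.dist_eq]⟩

lemma IsKResSet.map (ψ : G ≃g H) (hS : IsKResSet G k S) :
    IsKResSet H k (S.map ψ.toEquiv.toEmbedding) := by
  intro x y hxy
  obtain ⟨z, hz, hd⟩ := hS (ψ.symm x) (ψ.symm y) (by simpa using hxy)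
  refine ⟨ψ z, mem_map_of_mem _ hz, ?_⟩
  rwa [← ψ.apply_symm_apply x, ← ψ.apply_symm_apply y, ψ.dist_eq, ψ.dist_eq]

lemma setOf_kld_subset (ψ : G ≃g H) :
    {m : ℕ | ∃ S : Finset V, IsKDomSet G k S ∧ IsKResSet G k S ∧ S.card = m} ⊆
      {m : ℕ | ∃ S : Finset W, IsKDomSet H k S ∧ IsKResSet H k S ∧ S.card = m} := by
  rintro _ ⟨S, hd, hr, rfl⟩
  exact ⟨_, hd.map ψ, hr.map ψ, card_map _⟩

lemma kld_congr (ψ : G ≃g H) : kld G k = kld H k :=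
  congrArg sInf ((setOf_kld_subset ψ).antisymm (setOf_kld_subset ψ.symm))

lemma isKDomSet_univ [Fintype V] : IsKDomSet G k univ :=
  fun u hu => absurd (mem_univ u) hu

lemma SimpleGraph.Connected.min_dist_self_ne (hG : G.Connected) {u v : V} (huv : u ≠ v) :
    min (G.dist u u) (k + 1) ≠ min (G.dist v u) (k + 1) := by
  have := hG.pos_dist_of_ne huv.symm
  rw [dist_self]
  omega

lemma SimpleGraph.Connected.isKResSet_univ [Fintype V] (hG : G.Connected) :
    IsKResSet G k univ :=
  fun x _ hxy => ⟨x, mem_univ x, hG.min_dist_self_ne hxy⟩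

lemma IsKResSet.exists_mem_of_forall_dist_eq {R T : Finset V} (hR : IsKResSet G k R) {x y : V}
    (hxy : x ≠ y) (h : ∀ z, z ∉ T → G.dist x z = G.dist y z) : ∃ z ∈ R, z ∈ T := by
  obtain ⟨z, hzR, hz⟩ := hR x y hxy
  exact ⟨z, hzR, by_contra fun hzT => hz (by rw [h z hzT])⟩

end LocatingDominating

namespace LocDomEdgeDeletion

inductive Vert (r : ℕ) : Type
  | a | b | c
  | bit (j : Fin r)
  | x (s : Finset (Fin r))
  | y (s : Finset (Fin r))
  | x' (s : Finset (Fin r))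
  | y' (s : Finset (Fin r))
  deriving DecidableEq, Fintype

open Vert

variable {r : ℕ}

@[simp]
def Rel : Vert r → Vert r → Prop
  | b, _ => True
  | a, c => True
  | a, x' _ => True
  | c, y' _ => True
  | x s, x' t => s = t
  | y s, y' t => s = t
  | bit j, x s | bit j, y s | bit j, x' s | bit j, y' s => j ∈ s
  | _, _ => False

variable (r) in
def graph : SimpleGraph (Vert r) := SimpleGraph.fromRel Rel

variable (r) in
def graph' : SimpleGraph (Vert r) := (graph r).deleteEdges {s(a, b)}

@[simp]
lemma graph_adj {u v : Vert r} : (graph r).Adj u v ↔ u ≠ v ∧ (Rel u v ∨ Rel v u) :=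
  fromRel_adj _ _ _

@[simp]
lemma graph'_adj {u v : Vert r} : (graph' r).Adj u v ↔ (graph r).Adj u v ∧ s(u, v) ≠ s(a, b) :=
  deleteEdges_adj.trans (by simp)

def gadget (s : Finset (Fin r)) : Finset (Vert r) := {x s, y s, x' s, y' s}

variable (r) in
def locatingSet : Finset (Vert r) := {a, b, c} ∪ univ.image bit

lemma eq_of_mem_gadget {s t : Finset (Fin r)} {u : Vert r} (hs : u ∈ gadget s)
    (ht : u ∈ gadget t) : s = t := by
  simp only [gadget, mem_insert, mem_singleton] at hs ht
  rcases hs with rfl | rfl | rfl | rfl <;> simpa using ht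

lemma exists_mem_gadget {u : Vert r} (hu : u ∉ locatingSet r) : ∃ s, u ∈ gadget s := by
  cases u <;> simp_all [locatingSet, gadget]

lemma graph_adj_b (v : Vert r) (hv : v ≠ b) : (graph r).Adj b v := by
  simp [hv.symm]

lemma graph_connected : (graph r).Connected := connected_of_forall_adj graph_adj_b

lemma dist_x_eq_dist_y {s : Finset (Fin r)} {z : Vert r} (hz : z ∉ gadget s) :
    (graph r).dist (x s) z = (graph r).dist (y s) z := by
  have hadj : (graph r).Adj (x s) z ↔ (graph r).Adj (y s) z := by
    cases z <;> simp_all [gadget, eq_comm]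
  have hxz : x s ≠ z := by rintro rfl; simp [gadget] at hz
  have hyz : y s ≠ z := by rintro rfl; simp [gadget] at hz
  by_cases h : (graph r).Adj (x s) z
  · rw [dist_eq_one_iff_adj.2 h, dist_eq_one_iff_adj.2 (hadj.1 h)]
  · rw [dist_eq_two_of_forall_adj graph_adj_b hxz h,
      dist_eq_two_of_forall_adj graph_adj_b hyz (hadj.not.1 h)]

lemma two_pow_le_card {k : ℕ} {R : Finset (Vert r)} (hR : IsKResSet (graph r) k R) :
    2 ^ r ≤ R.card := by
  choose f hfR hfs using fun s : Finset (Fin r) =>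
    hR.exists_mem_of_forall_dist_eq (by simp : x s ≠ y s) (T := gadget s)
      fun z hz => dist_x_eq_dist_y hz
  have hf : f.Injective := fun s t hst => eq_of_mem_gadget (hfs s) (hst ▸ hfs t)
  simpa using card_le_card_of_injOn f (s := univ) (fun s _ => hfR s) hf.injOn

lemma two_pow_le_kld (k : ℕ) : 2 ^ r ≤ kld (graph r) k :=
  le_csInf ⟨_, univ, isKDomSet_univ, graph_connected.isKResSet_univ, rfl⟩
    (by rintro _ ⟨S, -, hS, rfl⟩; exact two_pow_le_card hS)

lemma graph'_adj_b (v : Vert r) (hva : v ≠ a) (hvb : v ≠ b) : (graph' r).Adj v b := by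
  simp [hva, hvb]

lemma graph'_connected : (graph' r).Connected := by
  refine (connected_iff_exists_forall_reachable _).2 ⟨b, fun v => ?_⟩
  by_cases hvb : v = b
  · exact hvb ▸ .refl v
  by_cases hva : v = a
  · have hca : (graph' r).Adj c a := by simp
    exact hva ▸ ((graph'_adj_b c (by simp) (by simp)).symm.reachable.trans hca.reachable)
  · exact (graph'_adj_b v hva hvb).symm.reachable

lemma graph'_dist_eq_two {u v : Vert r} (hua : u ≠ a) (hub : u ≠ b) (hva : v ≠ a) (hvb : v ≠ b)
    (huv : u ≠ v) (h : ¬(graph' r).Adj u v) : (graph' r).dist u v = 2 :=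
  dist_eq_two_of_adj_of_adj huv h (graph'_adj_b u hua hub) (graph'_adj_b v hva hvb).symm

lemma graph'_dist_bit {s : Finset (Fin r)} {u : Vert r} (hu : u ∈ gadget s) (j : Fin r) :
    (graph' r).dist u (bit j) = if j ∈ s then 1 else 2 := by
  simp only [gadget, mem_insert, mem_singleton] at hu
  have hadj : (graph' r).Adj u (bit j) ↔ j ∈ s := by
    rcases hu with rfl | rfl | rfl | rfl <;> simp
  split_ifs with hj
  · exact dist_eq_one_iff_adj.2 (hadj.2 hj)
  · rcases hu with rfl | rfl | rfl | rfl <;>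
      exact graph'_dist_eq_two (by simp) (by simp) (by simp) (by simp) (by simp) (hadj.not.2 hj)

lemma graph'_dist_y_a (s : Finset (Fin r)) : (graph' r).dist (y s) a = 3 := by
  refine dist_eq_three_of_adj_of_adj_of_adj (w₁ := y' s) (w₂ := c) (by simp) (by simp) ?_
    (by simp) (by simp) (by simp)
  ext w
  cases w <;> simp [mem_commonNeighbors]

lemma exists_dist_ne_of_mem_gadget {k : ℕ} (hk : 2 ≤ k) {s : Finset (Fin r)} {u v : Vert r}
    (hu : u ∈ gadget s) (hv : v ∈ gadget s) (huv : u ≠ v) :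
    ∃ z ∈ ({a, c} : Finset (Vert r)),
      min ((graph' r).dist u z) (k + 1) ≠ min ((graph' r).dist v z) (k + 1) := by
  have hxa : (graph' r).dist (x s) a = 2 :=
    dist_eq_two_of_adj_of_adj (w := x' s) (by simp) (by simp) (by simp) (by simp)
  have hya := graph'_dist_y_a (r := r) s
  have hx'a : (graph' r).dist (x' s) a = 1 := dist_eq_one_iff_adj.2 (by simp)
  have hy'a : (graph' r).dist (y' s) a = 2 :=
    dist_eq_two_of_adj_of_adj (w := c) (by simp) (by simp) (by simp) (by simp)
  have hy'c : (graph' r).dist (y' s) c = 1 := dist_eq_one_iff_adj.2 (by simp)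
  have hxc : (graph' r).dist (x s) c = 2 :=
    graph'_dist_eq_two (by simp) (by simp) (by simp) (by simp) (by simp) (by simp)
  have hyc : (graph' r).dist (y s) c = 2 :=
    graph'_dist_eq_two (by simp) (by simp) (by simp) (by simp) (by simp) (by simp)
  have hx'c : (graph' r).dist (x' s) c = 2 :=
    graph'_dist_eq_two (by simp) (by simp) (by simp) (by simp) (by simp) (by simp)
  simp only [gadget, mem_insert, mem_singleton] at hu hv
  rcases hu with rfl | rfl | rfl | rfl <;> rcases hv with rfl | rfl | rfl | rfl <;>
    first
    | exact absurd rfl huv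
    | simp only [mem_insert, mem_singleton, exists_eq_or_imp, exists_eq_left, hxa, hya, hx'a,
        hy'a, hxc, hyc, hx'c, hy'c]; omega

lemma isKDomSet_locatingSet {k : ℕ} (hk : 1 ≤ k) : IsKDomSet (graph' r) k (locatingSet r) := by
  intro u hu
  refine ⟨b, by simp [locatingSet], ?_⟩
  rw [dist_eq_one_iff_adj.2 (graph'_adj_b u (by rintro rfl; simp [locatingSet] at hu)
    (by rintro rfl; simp [locatingSet] at hu))]
  exact hk

lemma isKResSet_locatingSet {k : ℕ} (hk : 2 ≤ k) : IsKResSet (graph' r) k (locatingSet r) := by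
  intro u v huv
  by_cases hu : u ∈ locatingSet r
  · exact ⟨u, hu, graph'_connected.min_dist_self_ne huv⟩
  by_cases hv : v ∈ locatingSet r
  · exact ⟨v, hv, (graph'_connected.min_dist_self_ne huv.symm).symm⟩
  obtain ⟨s, hus⟩ := exists_mem_gadget hu
  obtain ⟨t, hvt⟩ := exists_mem_gadget hv
  obtain rfl | hst := eq_or_ne s t
  · obtain ⟨z, hz, hne⟩ := exists_dist_ne_of_mem_gadget hk hus hvt huv
    have hac : ({a, c} : Finset (Vert r)) ⊆ locatingSet r := by
      simp [locatingSet, insert_subset_iff]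
    exact ⟨z, hac hz, hne⟩
  · obtain ⟨j, hj⟩ : ∃ j, ¬(j ∈ s ↔ j ∈ t) := by
      by_contra! h
      exact hst (Finset.ext h)
    refine ⟨bit j, by simp [locatingSet], ?_⟩
    rw [graph'_dist_bit hus, graph'_dist_bit hvt]
    split_ifs <;> first | omega | tauto

lemma card_locatingSet_le : (locatingSet r).card ≤ 3 + r :=
  calc (locatingSet r).card ≤ ({a, b, c} : Finset (Vert r)).card + (univ.image bit).card :=
        card_union_le _ _
    _ ≤ 3 + r := add_le_add card_le_three (card_image_le.trans_eq (by simp))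

lemma kld_graph'_le {k : ℕ} (hk : 2 ≤ k) : kld (graph' r) k ≤ 3 + r :=
  le_trans (Nat.sInf_le
    ⟨locatingSet r, isKDomSet_locatingSet (by omega), isKResSet_locatingSet hk, rfl⟩)
    card_locatingSet_le

lemma mk_a_b_mem_edgeSet : s(a, b) ∈ (graph r).edgeSet := by simp

end LocDomEdgeDeletion

open LocDomEdgeDeletion in
theorem stmt_19_general (k : ℕ) (hk : 2 ≤ k) (N : ℕ) :
    ∃ (n : ℕ) (G : SimpleGraph (Fin n)) (e : Sym2 (Fin n)),
      G.Connected ∧ e ∈ G.edgeSet ∧ (G.deleteEdges {e}).Connected ∧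
      kld (G.deleteEdges {e}) k + N ≤ kld G k := by
  obtain ⟨r, hr⟩ : ∃ r, 3 + r + N ≤ 2 ^ r := by
    refine ⟨N + 3, ?_⟩
    have := N.lt_two_pow_self
    rw [pow_add]
    omega
  let ψ := Iso.map (Fintype.equivFin (Vert r)) (graph r)
  let ψ' : graph' r ≃g _ := ψ.deleteEdge s(.a, .b)
  refine ⟨_, _, Sym2.map ψ s(.a, .b), ψ.connected_iff.1 graph_connected,
    ψ.map_mem_edgeSet_iff.2 mk_a_b_mem_edgeSet, ψ'.connected_iff.1 graph'_connected, ?_⟩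
  rw [← kld_congr ψ, ← kld_congr ψ']
  have := kld_graph'_le (r := r) hk
  have := two_pow_le_kld (r := r) k
  omega

/-- For every integer `k ≥ 2` and positive integer `N`, there exist a finite simple
connected graph `G` and an edge `e` of `G` with `G - e` connected and
`γ_L^k(G) - γ_L^k(G - e) ≥ N`. -/
theorem stmt_19 (k : ℕ) (hk : 2 ≤ k) (N : ℕ) (hN : 1 ≤ N) :
    ∃ (n : ℕ) (G : SimpleGraph (Fin n)) (e : Sym2 (Fin n)),
      G.Connected ∧ e ∈ G.edgeSet ∧ (G.deleteEdges {e}).Connected ∧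
      kld (G.deleteEdges {e}) k + N ≤ kld G k :=
  stmt_19_general k hk N
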